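/- arXiv:1911.01163 — 5 statements merged into one kernel-verified Lean document; each statement's English description precedes it below -/
import Mathlib

section
/- Let ω₁, ω₂ > 0. Suppose f_p : (0,∞) × ℝ → [0,∞] and f_d : (0,∞) × (0,∞) → [0,∞] are measurable and satisfy the self-similar scaling laws f_p(t, x) = t^{-ω₁} · f_p(1, x·t^{-ω₁}) for all t > 0, x ∈ ℝ, and f_d(t, τ) = t^{-ω₂} · f_d(1, τ·t^{-ω₂}) for all t, τ > 0. Define the subordinated density f_x(t, x) := ∫₀^∞ f_p(τ, x) · f_d(t, τ) dτ. Then f_x(t, x) = t^{-ω₁ω₂} · f_x(1, x·t^{-ω₁ω₂}) for all t > 0 and x ∈ ℝ; i.e., the parent–directing subordinated process is again self-similar with exponent ω₁ω₂. -/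
open MeasureTheory
open scoped ENNReal

/-- Scaling change of variables for the Lebesgue integral on `(0, ∞)`. -/
lemma lintegral_Ioi_mul_right (g : ℝ → ℝ≥0∞) (hg : Measurable g) (c : ℝ) (hc : 0 < c) :
    ∫⁻ τ in Set.Ioi (0 : ℝ), g (τ * c) =
      ENNReal.ofReal c⁻¹ * ∫⁻ σ in Set.Ioi (0 : ℝ), g σ := by
  have hmap : Measure.map (· * c) (volume : Measure ℝ)
      = ENNReal.ofReal |c⁻¹| • volume := Real.map_volume_mul_right hc.ne'
  have h1 : ∫⁻ σ in Set.Ioi (0 : ℝ), g σ ∂(Measure.map (· * c) volume)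
      = ∫⁻ τ in ((· * c) ⁻¹' Set.Ioi (0 : ℝ)), g (τ * c) :=
    setLIntegral_map measurableSet_Ioi hg (measurable_mul_const c)
  have hpre : ((· * c) ⁻¹' Set.Ioi (0 : ℝ)) = Set.Ioi (0 : ℝ) := by
    ext τ
    simp [Set.mem_preimage, mul_pos_iff_of_pos_right hc]
  rw [hpre] at h1
  rw [← h1, hmap]
  simp [abs_of_pos (inv_pos.mpr hc), Measure.restrict_smul]

/-- The parent–directing subordinated density is again self-similar with
exponent `ω₁ * ω₂`. -/
theorem subordinated_selfSimilar
    (ω₁ ω₂ : ℝ) (hω₁ : 0 < ω₁) (hω₂ : 0 < ω₂)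
    (f_p : ℝ → ℝ → ℝ≥0∞) (f_d : ℝ → ℝ → ℝ≥0∞)
    (hmp : Measurable (Function.uncurry f_p))
    (hmd : Measurable (Function.uncurry f_d))
    (hsp : ∀ t : ℝ, 0 < t → ∀ x : ℝ,
      f_p t x = ENNReal.ofReal (t ^ (-ω₁)) * f_p 1 (x * t ^ (-ω₁)))
    (hsd : ∀ t : ℝ, 0 < t → ∀ τ : ℝ, 0 < τ →
      f_d t τ = ENNReal.ofReal (t ^ (-ω₂)) * f_d 1 (τ * t ^ (-ω₂)))
    (f_x : ℝ → ℝ → ℝ≥0∞)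
    (hfx : ∀ t x : ℝ, f_x t x = ∫⁻ τ in Set.Ioi (0 : ℝ), f_p τ x * f_d t τ) :
    ∀ t : ℝ, 0 < t → ∀ x : ℝ,
      f_x t x = ENNReal.ofReal (t ^ (-(ω₁ * ω₂))) * f_x 1 (x * t ^ (-(ω₁ * ω₂))) := by
  intro t ht x
  set c : ℝ := t ^ (-ω₂) with hc
  have hcpos : 0 < c := Real.rpow_pos_of_pos ht _
  set a : ℝ := t ^ (-(ω₁ * ω₂)) with ha
  have hapos : 0 < a := Real.rpow_pos_of_pos ht _
  set y : ℝ := x * a with hy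
  set g : ℝ → ℝ≥0∞ := fun σ => f_p σ y * f_d 1 σ with hg
  have hgm : Measurable g := by
    apply Measurable.mul
    · exact hmp.comp (measurable_id.prodMk measurable_const)
    · exact hmd.comp (measurable_const.prodMk measurable_id)
  -- key pointwise identity on (0,∞)
  have hpt : ∀ τ : ℝ, 0 < τ →
      f_p τ x * f_d t τ = ENNReal.ofReal a * (ENNReal.ofReal c * g (τ * c)) := by
    intro τ hτ
    have hσ : 0 < τ * c := mul_pos hτ hcpos
    -- f_p τ x = ofReal a * f_p (τ * c) y
    have hA : f_p τ x = ENNReal.ofReal a * f_p (τ * c) y := by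
      rw [hsp (τ * c) hσ y, hsp τ hτ x]
      have hσpow : (τ * c) ^ (-ω₁) = τ ^ (-ω₁) * t ^ (ω₁ * ω₂) := by
        rw [Real.mul_rpow hτ.le hcpos.le, hc, ← Real.rpow_mul ht.le, neg_mul_neg, mul_comm ω₂ ω₁]
      have harg : y * (τ * c) ^ (-ω₁) = x * τ ^ (-ω₁) := by
        rw [hσpow, hy, ha]
        have : t ^ (-(ω₁ * ω₂)) * t ^ (ω₁ * ω₂) = 1 := by
          rw [← Real.rpow_add ht]; simp
        calc x * t ^ (-(ω₁ * ω₂)) * (τ ^ (-ω₁) * t ^ (ω₁ * ω₂))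
            = x * τ ^ (-ω₁) * (t ^ (-(ω₁ * ω₂)) * t ^ (ω₁ * ω₂)) := by ring
          _ = x * τ ^ (-ω₁) := by rw [this, mul_one]
      rw [harg, ← mul_assoc, ← ENNReal.ofReal_mul hapos.le, hσpow]
      congr 2
      have : t ^ (-(ω₁ * ω₂)) * t ^ (ω₁ * ω₂) = 1 := by
        rw [← Real.rpow_add ht]; simp
      rw [ha]
      linear_combination (-(τ ^ (-ω₁))) * this
    rw [hsd t ht τ hτ, hA, hg]
    simp only [← hc]
    ring
  -- rewrite the integral
  rw [hfx t x, hfx 1 y]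
  have h1 : ∫⁻ τ in Set.Ioi (0 : ℝ), f_p τ x * f_d t τ
      = ∫⁻ τ in Set.Ioi (0 : ℝ), ENNReal.ofReal a * (ENNReal.ofReal c * g (τ * c)) := by
    apply setLIntegral_congr_fun measurableSet_Ioi
    exact fun τ hτ => hpt τ hτ
  rw [h1]
  have h2 : ∫⁻ τ in Set.Ioi (0 : ℝ), ENNReal.ofReal a * (ENNReal.ofReal c * g (τ * c))
      = ENNReal.ofReal a * (ENNReal.ofReal c * ∫⁻ τ in Set.Ioi (0 : ℝ), g (τ * c)) := by
    rw [lintegral_const_mul _ (by fun_prop)]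
    congr 1
    rw [lintegral_const_mul _ (by fun_prop)]
  rw [h2, lintegral_Ioi_mul_right g hgm c hcpos, ← mul_assoc (ENNReal.ofReal c),
    ← ENNReal.ofReal_mul hcpos.le, mul_inv_cancel₀ hcpos.ne', ENNReal.ofReal_one, one_mul]
end

section
/- Let f : ℝ → [0,∞) be a continuous, integrable, symmetric probability density (f(−x) = f(x) for all x, ∫_ℝ f = 1), and let a > 0, ω > 0. Define the image-method density f̃(x, t) := t^{-ω}·( f(x·t^{-ω}) − f((2a − x)·t^{-ω}) ) and the survival probability S(t) := ∫_{−∞}^{a} f̃(x, t) dx for t > 0. Then (i) S(t) = 2·∫₀^{a·t^{-ω}} f(y) dy for every t > 0, and (ii) S is differentiable on (0,∞) with −S′(t) = (2aω / t^{ω+1}) · f(a·t^{-ω}); hence the first passage time has density f_T(t) = (2aω / t^{ω+1}) · f(a / t^{ω}). -/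
/-!
With `c = t ^ (-ω)`, the substitution `y = x * c` turns `S t` into
`∫ y in Iic b, (f y - f (2 * b - y))` with `b = a * c`. By symmetry `f (2 * b - y) = f (y - 2 * b)`,
so the image term is the mass of `f` below `-b`, and `S t` is the mass of `f` on `[-b, b]`, that is
`2 * ∫ y in 0..b, f y`. The fundamental theorem of calculus and the chain rule then give `-S'`.
-/

open MeasureTheory Set

section

variable {E : Type*} [NormedAddCommGroup E] [NormedSpace ℝ E]

theorem integral_comp_mul_right_Iic (g : ℝ → E) (a : ℝ) {b : ℝ} (hb : 0 < b) :
    ∫ x in Iic a, g (x * b) = b⁻¹ • ∫ x in Iic (a * b), g x := by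
  rw [← integral_indicator measurableSet_Iic, ← integral_indicator measurableSet_Iic,
    ← abs_of_pos (inv_pos.mpr hb), ← Measure.integral_comp_mul_right]
  congr 1 with x
  rw [← indicator_comp_right (· * b), preimage_mul_const_Iic₀ _ hb,
    mul_div_cancel_right₀ _ hb.ne', Function.comp_def]

theorem integral_comp_sub_right_Iic (g : ℝ → E) (a d : ℝ) :
    ∫ x in Iic a, g (x - d) = ∫ x in Iic (a - d), g x := by
  rw [← integral_indicator measurableSet_Iic, ← integral_indicator measurableSet_Iic,
    ← integral_sub_right_eq_self ((Iic (a - d)).indicator g) d]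
  congr 1 with x
  rw [← indicator_comp_right (· - d), preimage_sub_const_Iic, sub_add_cancel, Function.comp_def]

theorem Function.Even.intervalIntegral_neg_self {g : ℝ → E} {b : ℝ} (hg : Function.Even g)
    (hgi : IntervalIntegrable g volume (-b) b) :
    ∫ x in -b..b, g x = (2 : ℝ) • ∫ x in 0..b, g x := by
  have h0 : (0 : ℝ) ∈ uIcc (-b) b := by
    rcases le_total 0 b with hb | hb <;> simp [hb]
  have hleft : ∫ x in -b..0, g x = ∫ x in 0..b, g x := by
    simpa [hg _] using (intervalIntegral.integral_comp_neg (a := 0) (b := b) g).symm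
  rw [← intervalIntegral.integral_add_adjacent_intervals
    (hgi.mono_set (uIcc_subset_uIcc left_mem_uIcc h0))
    (hgi.mono_set (uIcc_subset_uIcc h0 right_mem_uIcc)), hleft, two_smul]

theorem Function.Even.integral_Iic_sub_reflection {g : ℝ → E} (hg : Function.Even g)
    (hgi : Integrable g) (b : ℝ) :
    ∫ x in Iic b, (g x - g (2 * b - x)) = (2 : ℝ) • ∫ x in 0..b, g x := by
  have hreflect : ∫ x in Iic b, g (2 * b - x) = ∫ x in Iic (-b), g x := by
    calc ∫ x in Iic b, g (2 * b - x) = ∫ x in Iic b, g (x - 2 * b) := by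
          congr 1 with x; rw [← hg, neg_sub]
      _ = ∫ x in Iic (-b), g x := by rw [integral_comp_sub_right_Iic]; ring_nf
  rw [integral_sub hgi.integrableOn (hgi.comp_sub_left (2 * b)).integrableOn, hreflect,
    intervalIntegral.integral_Iic_sub_Iic hgi.integrableOn hgi.integrableOn,
    hg.intervalIntegral_neg_self hgi.intervalIntegrable]

end

theorem integral_Iio_scaled_image_density {f : ℝ → ℝ} (hf : Function.Even f) (hfi : Integrable f)
    (a : ℝ) {c : ℝ} (hc : 0 < c) :
    ∫ x in Iio a, c * (f (x * c) - f ((2 * a - x) * c)) = 2 * ∫ y in 0..a * c, f y := by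
  calc ∫ x in Iio a, c * (f (x * c) - f ((2 * a - x) * c))
      = c * ∫ x in Iic a, (fun y => f y - f (2 * (a * c) - y)) (x * c) := by
        rw [← integral_Iic_eq_integral_Iio, ← integral_const_mul]
        congr 1 with x
        ring_nf
    _ = 2 * ∫ y in 0..a * c, f y := by
        rw [integral_comp_mul_right_Iic (fun y => f y - f (2 * (a * c) - y)) a hc, smul_eq_mul,
          ← mul_assoc, mul_inv_cancel₀ hc.ne', one_mul, hf.integral_Iic_sub_reflection hfi,
          smul_eq_mul]

theorem hasDerivAt_intervalIntegral_mul_rpow_neg {f : ℝ → ℝ} (hf : Continuous f) (a ω : ℝ)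
    {t : ℝ} (ht : 0 < t) :
    HasDerivAt (fun s => ∫ y in 0..a * s ^ (-ω), f y)
      (-(a * ω / t ^ (ω + 1) * f (a * t ^ (-ω)))) t := by
  have hinner : HasDerivAt (fun s => a * s ^ (-ω)) (a * (-ω * t ^ (-ω - 1))) t :=
    (Real.hasDerivAt_rpow_const (Or.inl ht.ne')).const_mul a
  refine ((hf.integral_hasStrictDerivAt 0 _).hasDerivAt.comp t hinner).congr_deriv ?_
  rw [show -ω - 1 = -(ω + 1) by ring, Real.rpow_neg ht.le (ω + 1)]
  ring

theorem image_method_survival_and_fpt_density_general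
    (f : ℝ → ℝ) (hfc : Continuous f) (hfi : Integrable f)
    (hsymm : ∀ x, f (-x) = f x)
    (a ω : ℝ)
    (ftilde : ℝ → ℝ → ℝ)
    (hft : ∀ x t : ℝ, ftilde x t
      = t ^ (-ω) * (f (x * t ^ (-ω)) - f ((2 * a - x) * t ^ (-ω))))
    (S : ℝ → ℝ) (hS : ∀ t, S t = ∫ x in Set.Iio a, ftilde x t) :
    (∀ t : ℝ, 0 < t → S t = 2 * ∫ y in (0 : ℝ)..(a * t ^ (-ω)), f y) ∧
    (∀ t : ℝ, 0 < t →
      HasDerivAt S (-(2 * a * ω / t ^ (ω + 1) * f (a * t ^ (-ω)))) t) := by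
  have hsurvival : ∀ t : ℝ, 0 < t → S t = 2 * ∫ y in (0 : ℝ)..(a * t ^ (-ω)), f y := by
    intro t ht
    simp only [hS, hft]
    exact integral_Iio_scaled_image_density hsymm hfi a (Real.rpow_pos_of_pos ht _)
  refine ⟨hsurvival, fun t ht => ?_⟩
  have hS_eq : S =ᶠ[nhds t] fun s => 2 * ∫ y in (0 : ℝ)..(a * s ^ (-ω)), f y :=
    Filter.eventually_of_mem (Ioi_mem_nhds ht) hsurvival
  exact (((hasDerivAt_intervalIntegral_mul_rpow_neg hfc a ω ht).const_mul 2).congr_of_eventuallyEq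
    hS_eq).congr_deriv (by ring)

/-- Image-method survival probability and first-passage-time density for a symmetric
self-similar process with exponent `ω` and absorbing boundary at `a > 0`. -/
theorem image_method_survival_and_fpt_density
    (f : ℝ → ℝ) (hfc : Continuous f) (hfi : Integrable f)
    (hfnn : ∀ x, 0 ≤ f x) (hsymm : ∀ x, f (-x) = f x)
    (hnorm : ∫ x, f x = 1)
    (a ω : ℝ) (ha : 0 < a) (hω : 0 < ω)
    (ftilde : ℝ → ℝ → ℝ)
    (hft : ∀ x t : ℝ, ftilde x t
      = t ^ (-ω) * (f (x * t ^ (-ω)) - f ((2 * a - x) * t ^ (-ω))))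
    (S : ℝ → ℝ) (hS : ∀ t, S t = ∫ x in Set.Iio a, ftilde x t) :
    (∀ t : ℝ, 0 < t → S t = 2 * ∫ y in (0 : ℝ)..(a * t ^ (-ω)), f y) ∧
    (∀ t : ℝ, 0 < t →
      HasDerivAt S (-(2 * a * ω / t ^ (ω + 1) * f (a * t ^ (-ω)))) t) :=
  image_method_survival_and_fpt_density_general f hfc hfi hsymm a ω ftilde hft S hS
end

section
/- For every α > 0 and a > 0, ∫₀^∞ (ln t) · (a·α/(2√π)) · t^{−α/2−1} · exp(−a²/(4 t^{α})) dt = (2·ln a + γ)/α, where γ is the Euler–Mascheroni constant. Equivalently, the geometric power of the fractional-Brownian-motion H-noise T with density f_α is 𝒫(T) = exp(E[ln T]) = a^{2/α} · e^{γ/α}; in particular, for α = 1 (normal diffusion) the geometric power equals a²·e^{γ}. -/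
open MeasureTheory Real

open Set Filter Asymptotics

noncomputable section

local notation "γ" => Real.eulerMascheroniConstant

/-- pointwise identity between the complex Mellin integrand and the real one -/
lemma ofReal_integrand_eq {t : ℝ} (ht : 0 < t) :
    (t : ℂ) ^ ((1/2 : ℂ) - 1) • (Real.log t • ((Real.exp (-t) : ℝ) : ℂ))
      = ((Real.log t * (t ^ (-(1/2) : ℝ) * Real.exp (-t)) : ℝ) : ℂ) := by
  rw [show ((1/2 : ℂ) - 1) = ((-(1/2) : ℝ) : ℂ) by norm_num, ← Complex.ofReal_cpow ht.le]
  simp only [Complex.real_smul, smul_eq_mul]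
  push_cast
  ring

lemma mellin_aux :
    MellinConvergent (fun t => Real.log t • (fun x : ℝ => ((Real.exp (-x) : ℝ) : ℂ)) t) (1/2) ∧
      HasDerivAt (mellin fun x : ℝ => ((Real.exp (-x) : ℝ) : ℂ))
        (mellin (fun t => Real.log t • (fun x : ℝ => ((Real.exp (-x) : ℝ) : ℂ)) t) (1/2))
        (1/2) := by
  refine mellin_hasDerivAt_of_isBigO_rpow (a := 1) (b := 0) ?_ ?_ (by norm_num) ?_ (by norm_num)
  · refine (Continuous.continuousOn ?_).locallyIntegrableOn measurableSet_Ioi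
    exact Complex.continuous_ofReal.comp (Real.continuous_exp.comp continuous_neg)
  · rw [← isBigO_norm_left]
    simp_rw [Complex.norm_real, isBigO_norm_left]
    simpa only [neg_one_mul] using (isLittleO_exp_neg_mul_rpow_atTop zero_lt_one _).isBigO
  · simp_rw [neg_zero, rpow_zero]
    refine isBigO_const_of_tendsto (?_ : Tendsto _ _ (nhds (1 : ℂ))) one_ne_zero
    rw [(by simp : (1 : ℂ) = Real.exp (-0))]
    exact (Complex.continuous_ofReal.comp
      (Real.continuous_exp.comp continuous_neg)).continuousWithinAt

lemma J2_integrable :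
    IntegrableOn (fun s : ℝ => Real.log s * (s ^ (-(1/2) : ℝ) * Real.exp (-s))) (Ioi 0) := by
  have h := mellin_aux.1
  unfold MellinConvergent at h
  have h2 : IntegrableOn
      (fun t : ℝ => ((t : ℂ) ^ ((1/2 : ℂ) - 1) • (Real.log t • ((Real.exp (-t) : ℝ) : ℂ))).re)
      (Ioi 0) := h.re
  refine h2.congr_fun (fun t ht => ?_) measurableSet_Ioi
  beta_reduce
  rw [ofReal_integrand_eq ht, Complex.ofReal_re]

lemma J2_value :
    ∫ s in Ioi (0:ℝ), Real.log s * (s ^ (-(1/2) : ℝ) * Real.exp (-s))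
      = -Real.sqrt π * (γ + 2 * Real.log 2) := by
  set D : ℂ := mellin (fun t => Real.log t • (fun x : ℝ => ((Real.exp (-x) : ℝ) : ℂ)) t) (1/2)
    with hD
  have h1 : HasDerivAt Complex.GammaIntegral D (1/2) := by
    rw [Complex.GammaIntegral_eq_mellin]
    exact mellin_aux.2
  have h2 : HasDerivAt Complex.Gamma D (1/2) := by
    refine h1.congr_of_eventuallyEq ?_
    have hmem : {z : ℂ | 0 < z.re} ∈ nhds (1/2 : ℂ) := by
      exact (Complex.continuous_re.isOpen_preimage _ isOpen_Ioi).mem_nhds (by norm_num)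
    filter_upwards [hmem] with z hz using Complex.Gamma_eq_integral hz
  have h3 : HasDerivAt Real.Gamma D.re ((1/2 : ℝ)) := by
    have h2' : HasDerivAt Complex.Gamma D (((1/2 : ℝ) : ℂ)) := by push_cast; exact h2
    have := h2'.real_of_complex
    refine this.congr_of_eventuallyEq (Eventually.of_forall fun x => ?_)
    simp [Complex.Gamma_ofReal]
  have h4 : D.re = -Real.sqrt π * (γ + 2 * Real.log 2) :=
    h3.unique Real.hasDerivAt_Gamma_one_half
  have h5 : D = ((∫ s in Ioi (0:ℝ), Real.log s * (s ^ (-(1/2) : ℝ) * Real.exp (-s)) : ℝ) : ℂ) := by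
    rw [hD, mellin]
    exact (setIntegral_congr_fun measurableSet_Ioi fun t ht =>
      ofReal_integrand_eq ht).trans integral_ofReal
  rw [h5, Complex.ofReal_re] at h4
  exact h4

lemma J1_integrable :
    IntegrableOn (fun s : ℝ => s ^ (-(1/2) : ℝ) * Real.exp (-s)) (Ioi 0) := by
  refine (Real.GammaIntegral_convergent one_half_pos).congr_fun (fun x hx => ?_) measurableSet_Ioi
  rw [show (1/2 - 1 : ℝ) = -(1/2) by norm_num, mul_comm]

lemma J1_value :
    ∫ s in Ioi (0:ℝ), s ^ (-(1/2) : ℝ) * Real.exp (-s) = Real.sqrt π := by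
  have h := Real.Gamma_eq_integral one_half_pos
  rw [Real.Gamma_one_half_eq] at h
  rw [h]
  refine setIntegral_congr_fun measurableSet_Ioi fun t ht => ?_
  rw [show (1/2 - 1 : ℝ) = -(1/2) by norm_num, mul_comm]

end

noncomputable section

theorem fbm_fpt_log_moment_main
    (α a : ℝ) (hα : 0 < α) (ha : 0 < a) :
    (∫ t in Set.Ioi (0 : ℝ),
        Real.log t * (a * α / (2 * Real.sqrt π) * t ^ (-(α / 2) - 1) *
          Real.exp (-(a ^ 2) / (4 * t ^ α))))
      = (2 * Real.log a + Real.eulerMascheroniConstant) / α := by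
  have hπ : (0:ℝ) < Real.sqrt π := Real.sqrt_pos.mpr Real.pi_pos
  set C : ℝ := a * α / (2 * Real.sqrt π) with hC
  set g : ℝ → ℝ := fun u =>
    -(C/α^2) * (Real.log u * (u ^ (-(1/2):ℝ) * Real.exp (-(a^2/4) * u))) with hg
  have step1 : (∫ t in Ioi (0:ℝ),
      Real.log t * (C * t ^ (-(α/2) - 1) * Real.exp (-(a^2) / (4 * t ^ α))))
      = ∫ u in Ioi (0:ℝ), g u := by
    rw [← integral_comp_rpow_Ioi g (p := -α) (neg_ne_zero.mpr hα.ne')]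
    refine setIntegral_congr_fun measurableSet_Ioi fun t ht => ?_
    have ht : (0:ℝ) < t := ht
    have htα : (0:ℝ) < t ^ α := Real.rpow_pos_of_pos ht α
    have e1 : (t ^ (-α)) ^ (-(1/2):ℝ) = t ^ (α/2) := by
      rw [← Real.rpow_mul ht.le]; congr 1; ring
    have e2 : Real.exp (-(a^2/4) * t ^ (-α)) = Real.exp (-(a^2) / (4 * t ^ α)) := by
      rw [Real.rpow_neg ht.le]; congr 1; field_simp
    have e3 : Real.log (t ^ (-α)) = -α * Real.log t := Real.log_rpow ht _
    have e4 : t ^ (-(α/2) - 1) = t ^ (-α - 1) * t ^ (α/2) := by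
      rw [← Real.rpow_add ht]; congr 1; ring
    simp only [hg, smul_eq_mul]
    rw [e1, e2, e3, e4, abs_neg, abs_of_pos hα]
    field_simp
  set h : ℝ → ℝ := fun s =>
    -(C/α^2) * (Real.log ((4/a^2) * s) * (((4/a^2) * s) ^ (-(1/2):ℝ) * Real.exp (-s))) with hh
  have hb : (0:ℝ) < a^2/4 := by positivity
  have step2 : (∫ u in Ioi (0:ℝ), g u) = (a^2/4)⁻¹ * ∫ s in Ioi (0:ℝ), h s := by
    have e : ∀ u : ℝ, g u = h ((a^2/4) * u) := by
      intro u
      have h1 : (4/a^2) * ((a^2/4) * u) = u := by field_simp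
      simp only [hg, hh, h1, neg_mul]
    simp_rw [e]
    rw [integral_comp_mul_left_Ioi h 0 hb, mul_zero, smul_eq_mul]
  have h42 : ((4:ℝ)/a^2) ^ (-(1/2):ℝ) = a/2 := by
    rw [Real.rpow_neg (by positivity), ← Real.sqrt_eq_rpow]
    rw [show ((4:ℝ)/a^2) = (2/a)^2 by field_simp; ring, Real.sqrt_sq (by positivity), inv_div]
  have step3 : (∫ s in Ioi (0:ℝ), h s)
      = -(C/α^2) * (a/2) * (Real.log (4/a^2) * Real.sqrt π
          + -Real.sqrt π * (Real.eulerMascheroniConstant + 2 * Real.log 2)) := by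
    have e : ∀ s ∈ Ioi (0:ℝ), h s
        = -(C/α^2) * (a/2) * (Real.log (4/a^2) * (s ^ (-(1/2):ℝ) * Real.exp (-s))
            + Real.log s * (s ^ (-(1/2):ℝ) * Real.exp (-s))) := by
      intro s hs
      have hs : (0:ℝ) < s := hs
      simp only [hh]
      rw [Real.log_mul (by positivity) hs.ne', Real.mul_rpow (by positivity) hs.le, h42]
      ring
    rw [setIntegral_congr_fun measurableSet_Ioi e, integral_const_mul,
      integral_add (J1_integrable.const_mul _) J2_integrable, integral_const_mul,
      J1_value, J2_value]
  have l4 : Real.log ((4:ℝ)/a^2) = 2 * Real.log 2 - 2 * Real.log a := by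
    rw [Real.log_div (by norm_num) (by positivity), show (4:ℝ) = 2^2 by norm_num,
      Real.log_pow, Real.log_pow]
    push_cast; ring
  rw [step1, step2, step3, l4, hC]
  field_simp
  ring

end


/-- Logarithmic moment and geometric power of the FBM first-passage-time (H-noise)
density `f_α(t) = (aα/(2√π)) t^{-α/2-1} exp(-a²/(4 t^α))`:
`E[ln T] = (2 ln a + γ)/α`, hence the geometric power is `a^{2/α} e^{γ/α}`;
for `α = 1`, it equals `a² e^γ`. -/
theorem fbm_fpt_log_moment_and_geometric_power
    (α a : ℝ) (hα : 0 < α) (ha : 0 < a) :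
    (∫ t in Set.Ioi (0 : ℝ),
        Real.log t * (a * α / (2 * Real.sqrt π) * t ^ (-(α / 2) - 1) *
          Real.exp (-(a ^ 2) / (4 * t ^ α))))
      = (2 * Real.log a + Real.eulerMascheroniConstant) / α ∧
    Real.exp (∫ t in Set.Ioi (0 : ℝ),
        Real.log t * (a * α / (2 * Real.sqrt π) * t ^ (-(α / 2) - 1) *
          Real.exp (-(a ^ 2) / (4 * t ^ α))))
      = a ^ (2 / α) * Real.exp (Real.eulerMascheroniConstant / α) ∧
    (α = 1 →
      Real.exp (∫ t in Set.Ioi (0 : ℝ),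
          Real.log t * (a * α / (2 * Real.sqrt π) * t ^ (-(α / 2) - 1) *
            Real.exp (-(a ^ 2) / (4 * t ^ α))))
        = a ^ 2 * Real.exp Real.eulerMascheroniConstant) := by
  have main := fbm_fpt_log_moment_main α a hα ha
  refine ⟨main, ?_, ?_⟩
  · rw [main, show (2 * Real.log a + Real.eulerMascheroniConstant) / α
        = Real.log a * (2 / α) + Real.eulerMascheroniConstant / α by ring,
      Real.exp_add, ← Real.rpow_def_of_pos ha]
  · intro h1
    subst h1
    rw [main, div_one, show 2 * Real.log a = Real.log (a ^ 2) by
        rw [Real.log_pow]; push_cast; ring,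
      Real.exp_add, Real.exp_log (by positivity)]
end

section
/- For every real t, ∑_{n=0}^∞ (−t)^n / ( n! · Γ((1−n)/2) ) = exp(−t²/4)/√π, where Γ is the real Gamma function and terms with (1−n)/2 a nonpositive integer are interpreted as zero (since 1/Γ vanishes at the poles of Γ). That is, the M-Wright function of order ν = 1/2 equals the Gaussian density kernel: M_{1/2}(t) = (1/√π)·exp(−t²/4). -/
open Real

lemma gamma_half_sub (m : ℕ) :
    Real.Gamma (1 / 2 - m) =
      (-4 : ℝ) ^ m * m.factorial * Real.sqrt π / (2 * m).factorial := by
  induction m with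
  | zero => simpa using Real.Gamma_one_half_eq
  | succ m ih =>
    have hx : (1 / 2 : ℝ) - (m + 1 : ℕ) ≠ 0 := by
      push_cast
      intro h
      have h1 : (m : ℝ) = -1/2 := by linarith
      have h2 : (0:ℝ) ≤ (m:ℝ) := Nat.cast_nonneg m
      linarith
    have hrec := Real.Gamma_add_one hx
    have h1 : ((1 / 2 : ℝ) - (m + 1 : ℕ)) + 1 = 1 / 2 - m := by push_cast; ring
    rw [h1, ih] at hrec
    have hfac : ((2 * (m + 1)).factorial : ℝ)
        = (2*m+2) * (2*m+1) * (2*m).factorial := by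
      have : 2 * (m + 1) = (2*m+1) + 1 := by ring
      rw [this, Nat.factorial_succ, Nat.factorial_succ]
      push_cast; ring
    have hfac2 : ((m+1).factorial : ℝ) = (m+1) * m.factorial := by
      rw [Nat.factorial_succ]; push_cast; ring
    have h2m : ((2*m).factorial : ℝ) ≠ 0 := by positivity
    rw [hfac, hfac2, pow_succ, eq_div_iff (by positivity)]
    set G := Real.Gamma (1 / 2 - ((m + 1 : ℕ) : ℝ)) with hG
    field_simp at hrec
    push_cast at hrec
    linear_combination (2*(m:ℝ)+2) * hrec

/-- The M-Wright function of order `1/2` is the Gaussian kernel: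
`∑_{n=0}^∞ (-t)^n / (n! · Γ((1-n)/2)) = exp(-t²/4)/√π`
(terms at the poles of `Γ` vanish since `Real.Gamma` is `0` there). -/
theorem mWright_half_eq_gaussian (t : ℝ) :
    ∑' n : ℕ, (-t) ^ n / ((n.factorial : ℝ) * Real.Gamma ((1 - (n : ℝ)) / 2))
      = Real.exp (-(t ^ 2) / 4) / Real.sqrt π := by
  set f : ℕ → ℝ := fun n =>
    (-t) ^ n / ((n.factorial : ℝ) * Real.Gamma ((1 - (n : ℝ)) / 2)) with hf
  have hodd : ∀ m : ℕ, f (2 * m + 1) = 0 := by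
    intro m
    have h0 : Real.Gamma ((1 - ((2 * m + 1 : ℕ) : ℝ)) / 2) = 0 := by
      rw [show ((1 - ((2 * m + 1 : ℕ) : ℝ)) / 2) = -(m : ℝ) by push_cast; ring]
      exact Real.Gamma_neg_nat_eq_zero m
    show (-t) ^ (2*m+1) /
      (((2*m+1 : ℕ).factorial : ℝ) * Real.Gamma ((1 - ((2*m+1 : ℕ) : ℝ)) / 2)) = 0
    rw [h0, mul_zero, div_zero]
  have hinj : Function.Injective (fun m : ℕ => 2 * m) := by
    intro a b h
    simp only at h
    omega
  have hsupp : Function.support f ⊆ Set.range (fun m : ℕ => 2 * m) := by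
    intro x hx
    rcases Nat.even_or_odd x with ⟨c, hc⟩ | ⟨c, hc⟩
    · exact ⟨c, by show 2 * c = x; omega⟩
    · exact absurd (hc ▸ hodd c) hx
  have hkey := Function.Injective.tsum_eq hinj hsupp
  rw [← hkey]
  have heven : ∀ m : ℕ, f (2 * m) = (-(t^2)/4) ^ m / (m.factorial : ℝ) / Real.sqrt π := by
    intro m
    have h1 : ((1 - ((2 * m : ℕ) : ℝ)) / 2) = 1/2 - m := by push_cast; ring
    show (-t) ^ (2*m) /
      (((2*m : ℕ).factorial : ℝ) * Real.Gamma ((1 - ((2*m : ℕ) : ℝ)) / 2)) = _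
    rw [h1, gamma_half_sub]
    have h2m : ((2*m).factorial : ℝ) ≠ 0 := by positivity
    have hm : (m.factorial : ℝ) ≠ 0 := by positivity
    have hπ : Real.sqrt π ≠ 0 := by positivity
    have hneg : ((-t) : ℝ) ^ (2 * m) = (t^2) ^ m := by
      rw [pow_mul]; ring_nf
    have h4 : ((-4 : ℝ)) ^ m ≠ 0 := by
      apply pow_ne_zero; norm_num
    have key : (-(t^2)/4 : ℝ)^m * (-4:ℝ)^m = (t^2)^m := by
      rw [← mul_pow]; norm_num
    rw [hneg, ← key]
    field_simp
  simp only [heven]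
  rw [tsum_div_const]
  congr 1
  rw [Real.exp_eq_exp_ℝ, NormedSpace.exp_eq_tsum_div]
end

section
/- For every real s, ∫₀^∞ exp(−s·t) · (1/√π)·exp(−t²/4) dt = ∑_{n=0}^∞ (−s)^n / Γ(n/2 + 1). That is, the Laplace transform of the M-Wright function M_{1/2}(t) = (1/√π)e^{−t²/4} equals the Mittag-Leffler function E_{1/2}(−s). -/
open MeasureTheory Real

private lemma gamma_int (n : ℕ) :
    ∫ t in Set.Ioi (0 : ℝ), t ^ n * Real.exp (-(t ^ 2) / 4)
      = 2 ^ n * Real.Gamma (((n : ℝ) + 1) / 2) := by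
  have h1 : ∫ t in Set.Ioi (0 : ℝ), t ^ n * Real.exp (-(t ^ 2) / 4)
      = ∫ t in Set.Ioi (0 : ℝ), t ^ (n : ℝ) * Real.exp (-(1/4 : ℝ) * t ^ (2 : ℝ)) := by
    refine setIntegral_congr_fun measurableSet_Ioi (fun x hx => ?_)
    have hx0 : (0:ℝ) ≤ x := le_of_lt hx
    rw [Real.rpow_natCast, Real.rpow_two]
    ring_nf
  rw [h1, integral_rpow_mul_exp_neg_mul_rpow two_pos
    (lt_of_lt_of_le neg_one_lt_zero (Nat.cast_nonneg n)) (by norm_num : (0:ℝ) < 1/4)]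
  have h4 : ((1/4 : ℝ)) ^ (-((n : ℝ) + 1) / 2) = 2 ^ ((n : ℝ) + 1) := by
    rw [show ((1:ℝ)/4) = ((2:ℝ) ^ (-2 : ℝ)) by
      rw [Real.rpow_neg two_pos.le, show ((2:ℝ))^(2:ℝ) = 4 by
        rw [Real.rpow_two]; norm_num]
      norm_num]
    rw [← Real.rpow_mul two_pos.le]
    congr 1
    ring
  rw [h4]
  rw [show ((n:ℝ) + 1) = ((n+1 : ℕ) : ℝ) by push_cast; ring, Real.rpow_natCast]
  rw [pow_succ]
  push_cast
  ring

private lemma gamma_dup (n : ℕ) :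
    Real.Gamma ((n : ℝ) / 2 + 1) * (2 ^ n * Real.Gamma (((n : ℝ) + 1) / 2))
      = Real.sqrt π * (n.factorial : ℝ) := by
  have h := Real.Gamma_mul_Gamma_add_half (((n : ℝ) + 1) / 2)
  have e1 : ((n : ℝ) + 1) / 2 + 1 / 2 = (n : ℝ) / 2 + 1 := by ring
  have e2 : 2 * (((n : ℝ) + 1) / 2) = (n : ℝ) + 1 := by ring
  rw [e1, e2] at h
  have e3 : Real.Gamma ((n : ℝ) + 1) = (n.factorial : ℝ) := by
    exact_mod_cast Real.Gamma_nat_eq_factorial n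
  have e4 : (2 : ℝ) ^ (1 - ((n : ℝ) + 1)) = (2 ^ n)⁻¹ := by
    rw [show (1 - ((n : ℝ) + 1)) = -(n : ℝ) by ring, Real.rpow_neg two_pos.le,
      Real.rpow_natCast]
  rw [e3, e4] at h
  have h2 : (0:ℝ) < 2 ^ n := by positivity
  field_simp at h ⊢
  nlinarith [h]

private lemma fact_half_le_gamma (k : ℕ) :
    (k.factorial : ℝ) / 2 ≤ Real.Gamma ((k : ℝ) + 3/2) := by
  induction k with
  | zero =>
    have h1 : (1:ℝ) ≤ Real.sqrt π := by
      rw [show (1:ℝ) = Real.sqrt 1 by rw [Real.sqrt_one]]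
      exact Real.sqrt_le_sqrt (by linarith [Real.pi_gt_three])
    rw [show ((0:ℕ):ℝ) + 3/2 = 1/2 + 1 by norm_num,
      Real.Gamma_add_one (by norm_num), Real.Gamma_one_half_eq]
    simp [Nat.factorial]
    linarith [Real.pi_gt_three]
  | succ k ih =>
    have h : ((k+1:ℕ):ℝ) + 3/2 = ((k:ℝ) + 3/2) + 1 := by push_cast; ring
    have hpos : 0 < Real.Gamma ((k:ℝ) + 3/2) := Real.Gamma_pos_of_pos (by positivity)
    rw [h, Real.Gamma_add_one (by positivity)]
    calc ((k+1).factorial : ℝ)/2 = ((k:ℝ)+1) * ((k.factorial : ℝ)/2) := by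
          rw [Nat.factorial_succ]; push_cast; ring
      _ ≤ ((k:ℝ)+1) * Real.Gamma ((k:ℝ) + 3/2) :=
          mul_le_mul_of_nonneg_left ih (by positivity)
      _ ≤ ((k:ℝ)+3/2) * Real.Gamma ((k:ℝ) + 3/2) :=
          mul_le_mul_of_nonneg_right (by linarith) hpos.le

private lemma summable_ml (x : ℝ) (hx : 0 ≤ x) :
    Summable (fun n : ℕ => x ^ n / Real.Gamma ((n : ℝ) / 2 + 1)) := by
  set f : ℕ → ℝ := fun n => x ^ n / Real.Gamma ((n : ℝ) / 2 + 1) with hf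
  have hE : Summable (fun k : ℕ => f (2 * k)) := by
    refine (Real.summable_pow_div_factorial (x^2)).congr fun k => ?_
    simp only [hf]
    rw [show (((2*k : ℕ)):ℝ)/2 + 1 = (k:ℝ) + 1 by push_cast; ring,
      Real.Gamma_nat_eq_factorial, pow_mul]
  have hO : Summable (fun k : ℕ => f (2 * k + 1)) := by
    have hb : Summable (fun k : ℕ => (2*x) * ((x^2)^k / k.factorial)) :=
      (Real.summable_pow_div_factorial (x^2)).mul_left _
    refine Summable.of_nonneg_of_le (fun k => ?_) (fun k => ?_) hb
    · have : 0 < Real.Gamma (((2*k+1 : ℕ):ℝ)/2 + 1) :=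
        Real.Gamma_pos_of_pos (by positivity)
      simp only [hf]
      positivity
    · simp only [hf]
      rw [show (((2*k+1 : ℕ)):ℝ)/2 + 1 = (k:ℝ) + 3/2 by push_cast; ring]
      have hgpos : 0 < Real.Gamma ((k:ℝ) + 3/2) := Real.Gamma_pos_of_pos (by positivity)
      rw [div_le_iff₀ hgpos]
      have hfp : (0:ℝ) < k.factorial := by exact_mod_cast k.factorial_pos
      calc x ^ (2*k+1) = ((2*x) * ((x^2)^k / k.factorial)) * ((k.factorial : ℝ)/2) := by
            field_simp
            rw [pow_succ, pow_mul]
            ring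
        _ ≤ ((2*x) * ((x^2)^k / k.factorial)) * Real.Gamma ((k:ℝ) + 3/2) :=
            mul_le_mul_of_nonneg_left (fact_half_le_gamma k) (by positivity)
  exact (HasSum.even_add_odd (f := f) hE.hasSum hO.hasSum).summable

private lemma coeff_id (x : ℝ) (n : ℕ) :
    x ^ n / n.factorial * (1 / Real.sqrt π) * (2 ^ n * Real.Gamma (((n : ℝ) + 1) / 2))
      = x ^ n / Real.Gamma ((n : ℝ) / 2 + 1) := by
  have hd := gamma_dup n
  have h1 : 0 < Real.Gamma ((n:ℝ)/2 + 1) := Real.Gamma_pos_of_pos (by positivity)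
  have h2 : 0 < Real.sqrt π := Real.sqrt_pos.mpr Real.pi_pos
  have h3 : (0:ℝ) < n.factorial := by exact_mod_cast n.factorial_pos
  field_simp at hd ⊢
  linear_combination x ^ n * hd

/-- The Laplace transform of the M-Wright function `M_{1/2}(t) = (1/√π) e^{-t²/4}`
is the Mittag-Leffler function `E_{1/2}(-s) = ∑ (-s)^n/Γ(n/2+1)`. -/
theorem laplace_mWright_half_eq_mittagLeffler (s : ℝ) :
    ∫ t in Set.Ioi (0 : ℝ),
        Real.exp (-(s * t)) * (1 / Real.sqrt π * Real.exp (-(t ^ 2) / 4))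
      = ∑' n : ℕ, (-s) ^ n / Real.Gamma ((n : ℝ) / 2 + 1) := by
  set F : ℕ → ℝ → ℝ := fun n t =>
    ((-s) ^ n / n.factorial * (1 / Real.sqrt π)) * (t ^ n * Real.exp (-(t ^ 2) / 4)) with hF
  have base : ∀ n : ℕ, IntegrableOn (fun t : ℝ => t ^ n * Real.exp (-(t ^ 2) / 4))
      (Set.Ioi 0) := by
    intro n
    have h := integrableOn_rpow_mul_exp_neg_mul_sq (by norm_num : (0:ℝ) < 1/4)
      (lt_of_lt_of_le neg_one_lt_zero (Nat.cast_nonneg n))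
    refine h.congr_fun (fun t ht => ?_) measurableSet_Ioi
    dsimp only
    rw [Real.rpow_natCast]
    ring_nf
  have hInt : ∀ n : ℕ, Integrable (F n) (volume.restrict (Set.Ioi 0)) := fun n =>
    (base n).const_mul _
  have hnorm : ∀ n : ℕ, (∫ t in Set.Ioi (0:ℝ), ‖F n t‖)
      = |s| ^ n / Real.Gamma ((n : ℝ) / 2 + 1) := by
    intro n
    have step : ∫ t in Set.Ioi (0:ℝ), ‖F n t‖
        = ∫ t in Set.Ioi (0:ℝ),
            (|s| ^ n / n.factorial * (1 / Real.sqrt π)) * (t ^ n * Real.exp (-(t ^ 2) / 4)) := by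
      refine setIntegral_congr_fun measurableSet_Ioi (fun t ht => ?_)
      have ht0 : (0:ℝ) < t := ht
      have hnn : (0:ℝ) ≤ t ^ n * Real.exp (-(t ^ 2) / 4) := by positivity
      rw [hF]
      simp only [Real.norm_eq_abs, abs_mul]
      rw [abs_div, abs_pow, abs_neg, Nat.abs_cast,
        abs_of_nonneg (by positivity : (0:ℝ) ≤ 1 / Real.sqrt π),
        abs_of_pos (pow_pos ht0 n), Real.abs_exp]
    rw [step, MeasureTheory.integral_const_mul, gamma_int, coeff_id]
  have hsum : Summable (fun n : ℕ => ∫ t in Set.Ioi (0:ℝ), ‖F n t‖) := by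
    rw [funext hnorm]
    exact summable_ml |s| (abs_nonneg s)
  have hexp : ∀ y : ℝ, Real.exp y = ∑' n : ℕ, y ^ n / n.factorial := fun y => by
    rw [Real.exp_eq_exp_ℝ, NormedSpace.exp_eq_tsum_div]
  have hpt : ∀ t : ℝ, Real.exp (-(s * t)) * (1 / Real.sqrt π * Real.exp (-(t ^ 2) / 4))
      = ∑' n : ℕ, F n t := by
    intro t
    rw [hexp (-(s * t)), ← tsum_mul_right]
    refine tsum_congr fun n => ?_
    rw [hF]
    simp only
    rw [show -(s * t) = (-s) * t by ring, mul_pow]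
    ring
  calc ∫ t in Set.Ioi (0 : ℝ),
        Real.exp (-(s * t)) * (1 / Real.sqrt π * Real.exp (-(t ^ 2) / 4))
      = ∫ t in Set.Ioi (0 : ℝ), ∑' n : ℕ, F n t := by
        refine integral_congr_ae (Filter.Eventually.of_forall fun t => hpt t)
    _ = ∑' n : ℕ, ∫ t in Set.Ioi (0 : ℝ), F n t :=
        (MeasureTheory.integral_tsum_of_summable_integral_norm hInt hsum).symm
    _ = ∑' n : ℕ, (-s) ^ n / Real.Gamma ((n : ℝ) / 2 + 1) := by
        refine tsum_congr fun n => ?_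
        rw [hF]
        simp only
        rw [MeasureTheory.integral_const_mul, gamma_int, coeff_id]
end
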